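/- arXiv:math/0210023 — 2 statements merged into one kernel-verified Lean document; each statement's English description precedes it below -/
import Mathlib

section
/- Let s ≥ 1 and let τ = τ¹-τ²-⋯-τˢ be a multi-pattern in which each block τʲ is either the pattern 12 (an occurrence at position i means σ(i) < σ(i+1)) or the pattern 21 (σ(i) > σ(i+1)). Then for all k ≥ 1, in ℚ[[x]]: (1 − k·x)·(1 − x)^{k·s}·A_τ(x;k) = (1 − x)^{k·s} − ((1 − x)^k + k·x − 1)^s (equivalently, A_τ(x;k) = (1 − (1 + (k·x − 1)/(1 − x)^k)^s)/(1 − k·x)). -/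
/-- A word `σ : Fin n → Fin k` has an occurrence of the subword pattern `p : Fin m → Fin l`
at position `i` if `i + m ≤ n` and the corresponding letters are order-isomorphic to `p`. -/
def OccursAt {m l n k : ℕ} (p : Fin m → Fin l) (σ : Fin n → Fin k) (i : ℕ) : Prop :=
  ∃ h : i + m ≤ n, ∀ a b : Fin m,
    (σ ⟨i + a, lt_of_lt_of_le (Nat.add_lt_add_left a.isLt i) h⟩ <
      σ ⟨i + b, lt_of_lt_of_le (Nat.add_lt_add_left b.isLt i) h⟩) ↔ p a < p b

/-- `σ` avoids the subword pattern `p`. -/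
def AvoidsPat {m l n k : ℕ} (p : Fin m → Fin l) (σ : Fin n → Fin k) : Prop :=
  ∀ i : ℕ, ¬ OccursAt p σ i

/-- `σ` contains the multi-pattern `τ⁰-τ¹-⋯` (blocks indexed by `Fin s`): there are
positions `i j`, with each block's occurrence ending before the next block's start,
such that `τ j` occurs at `i j` for every `j`. -/
def ContainsMulti {s : ℕ} {m r : Fin s → ℕ} (τ : ∀ j : Fin s, Fin (m j) → Fin (r j))
    {n k : ℕ} (σ : Fin n → Fin k) : Prop :=
  ∃ i : Fin s → ℕ,
    (∀ (j : Fin s) (h : (j : ℕ) + 1 < s), i j + m j ≤ i ⟨(j : ℕ) + 1, h⟩) ∧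
      ∀ j : Fin s, OccursAt (τ j) σ (i j)

/-- The pattern 12 (a strict ascent). -/
def pat12 : Fin 2 → Fin 2 := ![0, 1]

/-- The pattern 21 (a strict descent). -/
def pat21 : Fin 2 → Fin 2 := ![1, 0]

/-- Generating function for the number of `k`-ary words avoiding a multi-pattern. -/
noncomputable def Amulti {s : ℕ} {m r : Fin s → ℕ} (τ : ∀ j : Fin s, Fin (m j) → Fin (r j))
    (k : ℕ) : PowerSeries ℚ :=
  PowerSeries.mk fun n => (Nat.card {σ : Fin n → Fin k // ¬ ContainsMulti τ σ} : ℚ)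

/-!
A word containing `τ¹-τ²-⋯-τˢ` factors uniquely as `u v`, where `u` ends with the first
occurrence of `τ¹` and `v` contains `τ²-⋯-τˢ`: matching each block greedily at its first
occurrence never loses a match. Hence `(1 - kx)·(1/(1 - kx) - A_τ) = ∏ⱼ D_{τʲ}`, where `D_p`
counts the words whose first occurrence of `p` is at their end. Appending a letter to a
`p`-avoiding word gives either a `p`-avoiding word or such a word, so
`D_p = 1 - (1 - kx)·W_p` with `W_p` the generating function of `p`-avoiders. The words
avoiding `12` are the weakly decreasing ones (those avoiding `21` correspond to them under
`a ↦ k - 1 - a`), so `W_12 = W_21 = (1 - x)^{-k}`.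
-/

open PowerSeries

section Counting

lemma natCard_and_add_natCard_and_not {α : Type*} [Finite α] {A B P Q : α → Prop}
    (hA : ∀ a, A a ↔ P a ∧ Q a) (hB : ∀ a, B a ↔ P a ∧ ¬ Q a) :
    Nat.card {a // A a} + Nat.card {a // B a} = Nat.card {a // P a} := by
  classical
  rw [Nat.card_congr (Equiv.subtypeEquivRight hA), Nat.card_congr (Equiv.subtypeEquivRight hB),
    ← Nat.card_congr (Equiv.subtypeSubtypeEquivSubtypeInter P Q),
    ← Nat.card_congr (Equiv.subtypeSubtypeEquivSubtypeInter P (¬ Q ·)), ← Nat.card_sum,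
    Nat.card_congr (Equiv.sumCompl _)]

lemma natCard_subtype_exists_eq_sum {α β : Type*} [Finite α] [Fintype β] (Q : β → α → Prop)
    (hQ : ∀ a b b', Q b a → Q b' a → b = b') :
    Nat.card {a // ∃ b, Q b a} = ∑ b, Nat.card {a // Q b a} := by
  rw [← Nat.card_sigma]
  refine (Nat.card_eq_of_bijective (fun x : Σ b, {a // Q b a} => ⟨x.2, x.1, x.2.2⟩)
    ⟨?_, fun ⟨a, b, h⟩ => ⟨⟨b, a, h⟩, rfl⟩⟩).symm
  rintro ⟨b, a, h⟩ ⟨b', a', h'⟩ he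
  obtain rfl : a = a' := congrArg Subtype.val he
  obtain rfl := hQ a b b' h h'
  rfl

end Counting

namespace Word

variable {α : Type*} {n : ℕ}

def drop (c : ℕ) (σ : Fin n → α) : Fin (n - c) → α :=
  fun a => σ ⟨c + a, by omega⟩

def append {ℓ : ℕ} (π : Fin ℓ → α) (ρ : Fin (n - ℓ) → α) : Fin n → α :=
  fun a => if h : (a : ℕ) < ℓ then π ⟨a, h⟩ else ρ ⟨a - ℓ, by omega⟩

def splitAt (ℓ : ℕ) (h : ℓ ≤ n) : (Fin n → α) ≃ (Fin ℓ → α) × (Fin (n - ℓ) → α) where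
  toFun σ := (Fin.take ℓ h σ, drop ℓ σ)
  invFun q := append q.1 q.2
  left_inv σ := by
    funext a
    by_cases ha : (a : ℕ) < ℓ
    · simp [append, ha, Fin.take]
    · simp only [append, ha, dif_neg, not_false_eq_true, drop]
      exact congrArg σ (Fin.ext (by simp only; omega))
  right_inv q := by
    refine Prod.ext (funext fun a => ?_) (funext fun a => ?_)
    · simp [append, Fin.take]
    · simp only [drop, append]
      rw [dif_neg (by simp)]
      exact congrArg q.2 (Fin.ext (by simp))

lemma natCard_take_and_drop {ℓ : ℕ} (h : ℓ ≤ n) (B : (Fin ℓ → α) → Prop)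
    (C : (Fin (n - ℓ) → α) → Prop) :
    Nat.card {σ : Fin n → α // B (Fin.take ℓ h σ) ∧ C (drop ℓ σ)} =
      Nat.card {π // B π} * Nat.card {ρ // C ρ} := by
  rw [← Nat.card_prod, ← Nat.card_congr Equiv.subtypeProdEquivProd]
  exact Nat.card_congr ((splitAt ℓ h).subtypeEquiv fun _ => Iff.rfl)

lemma natCard_take {ℓ : ℕ} (h : ℓ ≤ n) (B : (Fin ℓ → α) → Prop) :
    Nat.card {σ : Fin n → α // B (Fin.take ℓ h σ)} =
      Nat.card {π // B π} * Nat.card (Fin (n - ℓ) → α) := by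
  rw [← Nat.card_prod, ← Nat.card_congr Equiv.prodSubtypeFstEquivSubtypeProd]
  exact Nat.card_congr ((splitAt ℓ h).subtypeEquiv fun _ => Iff.rfl)

end Word

section Occurrences

variable {m l n k : ℕ} (p : Fin m → Fin l) (σ : Fin n → Fin k)

lemma occursAt_take {ℓ : ℕ} (h : ℓ ≤ n) (i : ℕ) :
    OccursAt p (Fin.take ℓ h σ) i ↔ i + m ≤ ℓ ∧ OccursAt p σ i :=
  ⟨fun ⟨hi, hp⟩ => ⟨hi, by omega, hp⟩, fun ⟨hi, _, hp⟩ => ⟨hi, hp⟩⟩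

lemma occursAt_drop {c : ℕ} (hc : c ≤ n) (i : ℕ) :
    OccursAt p (Word.drop c σ) i ↔ i + m ≤ n - c ∧ OccursAt p σ (c + i) := by
  simp only [OccursAt, Word.drop, Nat.add_assoc]
  exact ⟨fun ⟨hi, hp⟩ => ⟨hi, by omega, hp⟩, fun ⟨hi, _, hp⟩ => ⟨hi, hp⟩⟩

end Occurrences

def EndsWithFirstOcc {m l n k : ℕ} (p : Fin m → Fin l) (σ : Fin n → Fin k) : Prop :=
  OccursAt p σ (n - m) ∧ ∀ i < n - m, ¬ OccursAt p σ i

section Extension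

variable {m l n k : ℕ} (p : Fin m → Fin l) (σ : Fin (n + 1) → Fin k)

lemma avoidsPat_take_iff_forall :
    AvoidsPat p (Fin.take n n.le_succ σ) ↔ ∀ i, i + m ≤ n → ¬ OccursAt p σ i := by
  simp only [AvoidsPat, occursAt_take, not_and]

lemma endsWithFirstOcc_iff_avoidsPat_take :
    EndsWithFirstOcc p σ ↔ AvoidsPat p (Fin.take n n.le_succ σ) ∧ OccursAt p σ (n + 1 - m) := by
  rw [avoidsPat_take_iff_forall, EndsWithFirstOcc, and_comm]
  exact and_congr_left' ⟨fun h i hi => h i (by omega), fun h i hi => h i (by omega)⟩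

lemma avoidsPat_iff_avoidsPat_take :
    AvoidsPat p σ ↔ AvoidsPat p (Fin.take n n.le_succ σ) ∧ ¬ OccursAt p σ (n + 1 - m) := by
  rw [avoidsPat_take_iff_forall]
  constructor
  · exact fun h => ⟨fun i _ => h i, h _⟩
  rintro ⟨hinit, hlast⟩ i hi
  by_cases him : i + m ≤ n
  · exact hinit i him hi
  have hle : i + m ≤ n + 1 := hi.1
  exact hlast (by rwa [show n + 1 - m = i by omega])

end Extension

section FirstOccurrence

variable {m l n k : ℕ} {p : Fin m → Fin l} {σ : Fin n → Fin k}

lemma EndsWithFirstOcc.le_add_of_occursAt {ℓ : ℕ} {h : ℓ ≤ n}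
    (hfirst : EndsWithFirstOcc p (Fin.take ℓ h σ)) {i : ℕ} (hi : OccursAt p σ i) : ℓ ≤ i + m := by
  by_contra hlt
  exact hfirst.2 i (by omega) ((occursAt_take p σ h i).mpr ⟨by omega, hi⟩)

lemma EndsWithFirstOcc.take_unique {ℓ ℓ' : ℕ} {h : ℓ ≤ n} {h' : ℓ' ≤ n}
    (hfirst : EndsWithFirstOcc p (Fin.take ℓ h σ))
    (hfirst' : EndsWithFirstOcc p (Fin.take ℓ' h' σ)) :
    ℓ = ℓ' := by
  obtain ⟨hb, ho⟩ := (occursAt_take p σ h _).mp hfirst.1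
  obtain ⟨hb', ho'⟩ := (occursAt_take p σ h' _).mp hfirst'.1
  have := hfirst.le_add_of_occursAt ho'
  have := hfirst'.le_add_of_occursAt ho
  omega

end FirstOccurrence

noncomputable def avoidGF {m l : ℕ} (p : Fin m → Fin l) (k : ℕ) : ℚ⟦X⟧ :=
  mk fun n => (Nat.card {σ : Fin n → Fin k // AvoidsPat p σ} : ℚ)

noncomputable def firstOccGF {m l : ℕ} (p : Fin m → Fin l) (k : ℕ) : ℚ⟦X⟧ :=
  mk fun n => (Nat.card {σ : Fin n → Fin k // EndsWithFirstOcc p σ} : ℚ)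

lemma coeff_succ_one_sub_natCast_mul_X_mul (k : ℕ) (f : ℚ⟦X⟧) (n : ℕ) :
    coeff (n + 1) ((1 - (k : ℚ⟦X⟧) * X) * f) = coeff (n + 1) f - k * coeff n f := by
  rw [← map_natCast (C (R := ℚ)), sub_mul, one_mul, mul_assoc, map_sub, coeff_C_mul,
    coeff_succ_X_mul]

lemma firstOccGF_add_one_sub_mul_avoidGF {m l : ℕ} (p : Fin m → Fin l) (k : ℕ) :
    firstOccGF p k + (1 - (k : ℚ⟦X⟧) * X) * avoidGF p k = 1 := by
  ext n
  rcases n with _ | n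
  · have h := natCard_and_add_natCard_and_not (P := fun _ : Fin 0 → Fin k => True)
      (Q := (OccursAt p · 0)) (A := EndsWithFirstOcc p) (B := AvoidsPat p)
      (fun σ => by simp [EndsWithFirstOcc])
      (fun σ => ⟨fun h => ⟨trivial, h 0⟩,
        fun h i hi => h.2 (by rwa [show i = 0 by have := hi.1; omega] at hi)⟩)
    simpa [firstOccGF, avoidGF] using congrArg (Nat.cast (R := ℚ)) h
  · have h := natCard_and_add_natCard_and_not
      (endsWithFirstOcc_iff_avoidsPat_take (k := k) (n := n) p) (avoidsPat_iff_avoidsPat_take p)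
    rw [Word.natCard_take, Nat.card_fun, Nat.add_sub_cancel_left, Nat.card_fin, Nat.card_fin,
      pow_one] at h
    rw [map_add, coeff_succ_one_sub_natCast_mul_X_mul]
    simp only [firstOccGF, avoidGF, coeff_mk, coeff_one, Nat.add_one_ne_zero, if_false]
    rw [← Nat.cast_inj (R := ℚ)] at h
    push_cast at h
    linear_combination h

section LengthTwo

variable {n k : ℕ} (σ : Fin n → Fin k)

lemma occursAt_pat12_iff (i : ℕ) :
    OccursAt pat12 σ i ↔ ∃ h : i + 2 ≤ n, σ ⟨i, by omega⟩ < σ ⟨i + 1, by omega⟩ := by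
  refine exists_congr fun h => ⟨fun hp => (hp 0 1).2 (by decide), fun hlt a b => ?_⟩
  fin_cases a <;> fin_cases b <;> simp [pat12, hlt, hlt.le]

lemma occursAt_pat21_iff (i : ℕ) :
    OccursAt pat21 σ i ↔ ∃ h : i + 2 ≤ n, σ ⟨i + 1, by omega⟩ < σ ⟨i, by omega⟩ := by
  refine exists_congr fun h => ⟨fun hp => (hp 1 0).2 (by decide), fun hlt a b => ?_⟩
  fin_cases a <;> fin_cases b <;> simp [pat21, hlt, hlt.le]

lemma avoidsPat_pat12_iff_antitone : AvoidsPat pat12 σ ↔ Antitone σ := by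
  rcases n with _ | n
  · exact iff_of_true (fun i ⟨h, _⟩ => by omega) (Subsingleton.antitone σ)
  simp only [AvoidsPat, occursAt_pat12_iff, not_exists, not_lt, Fin.antitone_iff_succ_le]
  exact ⟨fun h i => h i (by omega), fun h i hi => h ⟨i, by omega⟩⟩

lemma avoidsPat_pat21_iff_rev : AvoidsPat pat21 σ ↔ AvoidsPat pat12 (Fin.rev ∘ σ) := by
  simp only [AvoidsPat, occursAt_pat12_iff, occursAt_pat21_iff, Function.comp, Fin.rev_lt_rev]

end LengthTwo

lemma antitone_cons_top_iff {α : Type*} [Preorder α] [OrderTop α] {n : ℕ} {ρ : Fin n → α} :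
    Antitone (Fin.cons ⊤ ρ : Fin (n + 1) → α) ↔ Antitone ρ := by
  refine ⟨fun h i j hij => by simpa using h (Fin.succ_le_succ_iff.mpr hij), fun h i j hij => ?_⟩
  induction j using Fin.cases with
  | zero => rw [Fin.le_zero_iff.mp hij]
  | succ j =>
    induction i using Fin.cases with
    | zero => simp
    | succ i => simpa using h (Fin.succ_le_succ_iff.mp hij)

lemma natCard_antitone_succ_succ (n k : ℕ) :
    Nat.card {σ : Fin (n + 1) → Fin (k + 1) // Antitone σ} =
      Nat.card {ρ : Fin n → Fin (k + 1) // Antitone ρ} +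
        Nat.card {ρ : Fin (n + 1) → Fin k // Antitone ρ} := by
  rw [← natCard_and_add_natCard_and_not (Q := fun σ : Fin (n + 1) → Fin (k + 1) => σ 0 = ⊤)
    (fun _ => Iff.rfl) (fun _ => Iff.rfl)]
  congr 1
  · have hcons (σ : {σ : Fin (n + 1) → Fin (k + 1) // Antitone σ ∧ σ 0 = ⊤}) :
        Fin.cons ⊤ (Fin.tail σ.1) = σ.1 := by
      simpa [σ.2.2] using Fin.cons_self_tail σ.1
    exact Nat.card_congr
      { toFun σ := ⟨Fin.tail σ.1, antitone_cons_top_iff.mp ((hcons σ).symm ▸ σ.2.1)⟩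
        invFun ρ := ⟨Fin.cons ⊤ ρ.1, antitone_cons_top_iff.mpr ρ.2, rfl⟩
        left_inv σ := Subtype.ext (hcons σ)
        right_inv ρ := Subtype.ext (Fin.tail_cons (α := fun _ => Fin (k + 1)) ⊤ ρ.1) }
  · have hne (σ : {σ : Fin (n + 1) → Fin (k + 1) // Antitone σ ∧ σ 0 ≠ ⊤}) (a) :
        σ.1 a ≠ Fin.last k :=
      ((σ.2.1 (Fin.zero_le a)).trans_lt (lt_top_iff_ne_top.mpr σ.2.2)).ne
    exact Nat.card_congr
      { toFun σ := ⟨fun a => (σ.1 a).castPred (hne σ a),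
          fun a b hab => Fin.castPred_le_castPred_iff.mpr (σ.2.1 hab)⟩
        invFun ρ := ⟨Fin.castSucc ∘ ρ.1, Fin.strictMono_castSucc.monotone.comp_antitone ρ.2,
          (Fin.top_eq_last k).symm ▸ Fin.castSucc_ne_last _⟩
        left_inv σ := Subtype.ext (funext fun a => Fin.castSucc_castPred _ (hne σ a))
        right_inv ρ := Subtype.ext (funext fun a => Fin.castPred_castSucc) }

lemma avoidGF_pat12 (k : ℕ) :
    avoidGF pat12 k = mk fun n => (Nat.card {σ : Fin n → Fin k // Antitone σ} : ℚ) := by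
  simp only [avoidGF, avoidsPat_pat12_iff_antitone]

lemma avoidGF_pat21 (k : ℕ) : avoidGF pat21 k = avoidGF pat12 k := by
  ext n
  simp only [avoidGF, coeff_mk, Nat.cast_inj]
  exact Nat.card_congr
    (((Equiv.refl _).arrowCongr Fin.revPerm).subtypeEquiv avoidsPat_pat21_iff_rev)

lemma natCard_antitone_fin_zero (α : Type*) [Preorder α] :
    Nat.card {σ : Fin 0 → α // Antitone σ} = 1 := by
  rw [Nat.card_congr (Equiv.subtypeUnivEquiv Subsingleton.antitone), Nat.card_unique]

lemma one_sub_X_pow_mul_avoidGF_pat12 (k : ℕ) : (1 - X) ^ k * avoidGF pat12 k = 1 := by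
  rw [avoidGF_pat12]
  induction k with
  | zero =>
    ext (_ | n)
    · simp only [pow_zero, one_mul, coeff_mk, natCard_antitone_fin_zero, Nat.cast_one, coeff_one,
        if_pos]
    · simp
  | succ k ih =>
    have hstep : (1 - X) * (mk fun n => (Nat.card {σ : Fin n → Fin (k + 1) // Antitone σ} : ℚ)) =
        mk fun n => (Nat.card {σ : Fin n → Fin k // Antitone σ} : ℚ) := by
      ext (_ | n) <;> simp only [sub_mul, one_mul, map_sub, coeff_mk, coeff_zero_X_mul,
        coeff_succ_X_mul, natCard_antitone_fin_zero, natCard_antitone_succ_succ, Nat.cast_add]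
      · simp
      · ring
    rw [pow_succ, mul_assoc, hstep, ih]

lemma one_sub_X_pow_mul_firstOccGF {p : Fin 2 → Fin 2} (hp : p = pat12 ∨ p = pat21) (k : ℕ) :
    (1 - X) ^ k * firstOccGF p k = (1 - X) ^ k + (k : ℚ⟦X⟧) * X - 1 := by
  have hW : (1 - X) ^ k * avoidGF p k = 1 := by
    rcases hp with rfl | rfl
    · exact one_sub_X_pow_mul_avoidGF_pat12 k
    · rw [avoidGF_pat21, one_sub_X_pow_mul_avoidGF_pat12]
  linear_combination
    (1 - X) ^ k * firstOccGF_add_one_sub_mul_avoidGF p k - (1 - (k : ℚ⟦X⟧) * X) * hW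

section MultiPattern

variable {s n k : ℕ}

lemma containsMulti_of_isEmpty {m r : Fin 0 → ℕ} (τ : ∀ j, Fin (m j) → Fin (r j))
    (σ : Fin n → Fin k) : ContainsMulti τ σ :=
  ⟨finZeroElim, finZeroElim, finZeroElim⟩

lemma ContainsMulti.drop_of_le {m r : Fin s → ℕ} {τ : ∀ j, Fin (m j) → Fin (r j)}
    {σ : Fin n → Fin k} {c c' : ℕ} (hc' : c' ≤ c) (hc : c ≤ n)
    (h : ContainsMulti τ (Word.drop c σ)) : ContainsMulti τ (Word.drop c' σ) := by
  obtain ⟨I, hchain, hocc⟩ := h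
  refine ⟨fun j => I j + (c - c'), fun j hj => by have := hchain j hj; dsimp only; omega,
    fun j => ?_⟩
  obtain ⟨hj, ho⟩ := (occursAt_drop _ σ hc _).mp (hocc j)
  refine (occursAt_drop _ σ (hc'.trans hc) _).mpr ⟨by dsimp only; omega, ?_⟩
  rwa [show c' + (I j + (c - c')) = c + I j by omega]

variable {m r : Fin (s + 1) → ℕ} (τ : ∀ j, Fin (m j) → Fin (r j)) (σ : Fin n → Fin k)

lemma containsMulti_succ_iff :
    ContainsMulti τ σ ↔ ∃ i, OccursAt (τ 0) σ i ∧
      ContainsMulti (fun j => τ j.succ) (Word.drop (i + m 0) σ) := by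
  constructor
  · rintro ⟨I, hchain, hocc⟩
    have hc : I 0 + m 0 ≤ n := (hocc 0).1
    have hlow (j : Fin s) : I 0 + m 0 ≤ I j.succ := by
      obtain ⟨t, ht⟩ := j
      induction t with
      | zero => exact hchain 0 (by simp; omega)
      | succ t ih =>
        exact (ih (by omega)).trans
          ((Nat.le_add_right _ _).trans (hchain ⟨t + 1, by omega⟩ (by simp; omega)))
    refine ⟨I 0, hocc 0, fun j => I j.succ - (I 0 + m 0), fun j hj => ?_, fun j => ?_⟩
    · have hstep : I j.succ + m j.succ ≤ I (⟨j + 1, hj⟩ : Fin s).succ :=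
        hchain j.succ (by simp; omega)
      have := hlow j
      dsimp only
      omega
    · have hj : I j.succ + m j.succ ≤ n := (hocc j.succ).1
      have := hlow j
      refine (occursAt_drop _ σ hc _).mpr ⟨by dsimp only; omega, ?_⟩
      rw [Nat.add_sub_cancel' (hlow j)]
      exact hocc j.succ
  · rintro ⟨i, hi, I, hchain, hocc⟩
    have hc : i + m 0 ≤ n := hi.1
    refine ⟨Fin.cons i fun j => i + m 0 + I j, fun j hj => ?_, fun j => ?_⟩
    · induction j using Fin.cases with
      | zero => exact show i + m 0 ≤ i + m 0 + I ⟨0, by simpa using hj⟩ by omega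
      | succ j =>
        have : I j + m j.succ ≤ I ⟨j + 1, by simpa using hj⟩ := hchain j (by simpa using hj)
        exact show i + m 0 + I j + m j.succ ≤ i + m 0 + I ⟨j + 1, by simpa using hj⟩ by omega
    · induction j using Fin.cases with
      | zero => exact hi
      | succ j => exact ((occursAt_drop _ σ hc _).mp (hocc j)).2

lemma containsMulti_succ_iff_firstOcc :
    ContainsMulti τ σ ↔ ∃ ℓ : Fin (n + 1), EndsWithFirstOcc (τ 0) (Fin.take ℓ ℓ.is_le σ) ∧
      ContainsMulti (fun j => τ j.succ) (Word.drop ℓ σ) := by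
  classical
  rw [containsMulti_succ_iff]
  constructor
  · rintro ⟨i, hi, hrest⟩
    have hex : ∃ q, OccursAt (τ 0) σ q := ⟨i, hi⟩
    have hfirst : OccursAt (τ 0) σ (Nat.find hex) := Nat.find_spec hex
    have hb : Nat.find hex + m 0 ≤ n := hfirst.1
    refine ⟨⟨Nat.find hex + m 0, by omega⟩, ⟨?_, fun q hq ho => ?_⟩,
      hrest.drop_of_le (by simpa using Nat.find_min' hex hi) hi.1⟩
    · exact (occursAt_take _ σ _ _).mpr ⟨by simp, by simpa using hfirst⟩
    · exact Nat.find_min hex (by simpa using hq) ((occursAt_take _ σ _ _).mp ho).2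
  · rintro ⟨ℓ, hfirst, hrest⟩
    obtain ⟨hb, ho⟩ := (occursAt_take _ σ ℓ.is_le _).mp hfirst.1
    exact ⟨ℓ - m 0, ho, by rwa [Nat.sub_add_cancel (by omega)]⟩

end MultiPattern

noncomputable def containGF {s : ℕ} {m r : Fin s → ℕ} (τ : ∀ j, Fin (m j) → Fin (r j))
    (k : ℕ) : ℚ⟦X⟧ :=
  mk fun n => (Nat.card {σ : Fin n → Fin k // ContainsMulti τ σ} : ℚ)

lemma containGF_succ {s : ℕ} {m r : Fin (s + 1) → ℕ} (τ : ∀ j, Fin (m j) → Fin (r j)) (k : ℕ) :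
    containGF τ k = firstOccGF (τ 0) k * containGF (fun j => τ j.succ) k := by
  ext n
  rw [coeff_mul, Finset.Nat.sum_antidiagonal_eq_sum_range_succ_mk, ← Fin.sum_univ_eq_sum_range
    fun ℓ => coeff ℓ (firstOccGF (τ 0) k) * coeff (n - ℓ) (containGF (fun j => τ j.succ) k)]
  simp only [containGF, firstOccGF, coeff_mk]
  rw [Nat.card_congr (Equiv.subtypeEquivRight fun σ => containsMulti_succ_iff_firstOcc τ σ),
    natCard_subtype_exists_eq_sum _ fun σ ℓ ℓ' h h' => Fin.ext (h.1.take_unique h'.1)]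
  push_cast
  exact Finset.sum_congr rfl fun ℓ _ => by rw [Word.natCard_take_and_drop]; push_cast; rfl

lemma one_sub_natCast_mul_X_mul_mk_pow (k : ℕ) :
    (1 - (k : ℚ⟦X⟧) * X) * mk (fun n => (k : ℚ) ^ n) = 1 := by
  have h := congrArg (rescale (k : ℚ)) (mk_one_mul_one_sub_eq_one ℚ)
  rw [map_mul, map_sub, map_one, rescale_X, rescale_mk, map_natCast, mul_comm] at h
  simpa using h

lemma containGF_of_isEmpty {m r : Fin 0 → ℕ} (τ : ∀ j, Fin (m j) → Fin (r j)) (k : ℕ) :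
    containGF τ k = mk fun n => (k : ℚ) ^ n := by
  ext n
  simp [containGF, containsMulti_of_isEmpty]

lemma one_sub_natCast_mul_X_mul_containGF {s : ℕ} {m r : Fin s → ℕ}
    (τ : ∀ j, Fin (m j) → Fin (r j)) (k : ℕ) :
    (1 - (k : ℚ⟦X⟧) * X) * containGF τ k = ∏ j, firstOccGF (τ j) k := by
  induction s with
  | zero =>
    rw [containGF_of_isEmpty, one_sub_natCast_mul_X_mul_mk_pow, Finset.univ_eq_empty,
      Finset.prod_empty]
  | succ s ih => rw [containGF_succ, mul_left_comm, ih, Fin.prod_univ_succ]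

lemma Amulti_add_containGF {s : ℕ} {m r : Fin s → ℕ} (τ : ∀ j, Fin (m j) → Fin (r j)) (k : ℕ) :
    Amulti τ k + containGF τ k = mk fun n => (k : ℚ) ^ n := by
  ext n
  have h := natCard_and_add_natCard_and_not (P := fun _ : Fin n → Fin k => True)
    (Q := fun σ => ¬ ContainsMulti τ σ) (A := fun σ => ¬ ContainsMulti τ σ)
    (B := ContainsMulti τ) (fun σ => by simp) (fun σ => by simp)
  simpa [Amulti, containGF] using congrArg (Nat.cast (R := ℚ)) h

lemma one_sub_natCast_mul_X_mul_Amulti {s : ℕ} {m r : Fin s → ℕ}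
    (τ : ∀ j, Fin (m j) → Fin (r j)) (k : ℕ) :
    (1 - (k : ℚ⟦X⟧) * X) * Amulti τ k = 1 - ∏ j, firstOccGF (τ j) k := by
  linear_combination (1 - (k : ℚ⟦X⟧) * X) * Amulti_add_containGF τ k +
    one_sub_natCast_mul_X_mul_mk_pow k - one_sub_natCast_mul_X_mul_containGF τ k

theorem stmt15_general (s : ℕ) (τ : Fin s → Fin 2 → Fin 2)
    (hτ : ∀ j, τ j = pat12 ∨ τ j = pat21) (k : ℕ) :
    (1 - (k : PowerSeries ℚ) * PowerSeries.X) * (1 - PowerSeries.X) ^ (k * s) *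
        Amulti τ k =
      (1 - PowerSeries.X) ^ (k * s) -
        ((1 - PowerSeries.X) ^ k + (k : PowerSeries ℚ) * PowerSeries.X - 1) ^ s := by
  calc (1 - (k : ℚ⟦X⟧) * X) * (1 - X) ^ (k * s) * Amulti τ k
      = (1 - X) ^ (k * s) * (1 - ∏ j, firstOccGF (τ j) k) := by
        rw [← one_sub_natCast_mul_X_mul_Amulti]; ring
    _ = (1 - X) ^ (k * s) - ∏ j, (1 - X) ^ k * firstOccGF (τ j) k := by
        rw [Finset.prod_mul_distrib, Finset.prod_const, Finset.card_univ, Fintype.card_fin,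
          pow_mul]
        ring
    _ = (1 - X) ^ (k * s) - ((1 - X) ^ k + (k : ℚ⟦X⟧) * X - 1) ^ s := by
        simp only [one_sub_X_pow_mul_firstOccGF (hτ _), Finset.prod_const, Finset.card_univ,
          Fintype.card_fin]

theorem stmt15 (s : ℕ) (hs : 1 ≤ s) (τ : Fin s → Fin 2 → Fin 2)
    (hτ : ∀ j, τ j = pat12 ∨ τ j = pat21) (k : ℕ) (hk : 1 ≤ k) :
    (1 - (k : PowerSeries ℚ) * PowerSeries.X) * (1 - PowerSeries.X) ^ (k * s) *
        Amulti τ k =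
      (1 - PowerSeries.X) ^ (k * s) -
        ((1 - PowerSeries.X) ^ k + (k : PowerSeries ℚ) * PowerSeries.X - 1) ^ s :=
  stmt15_general s τ hτ k
end

section
/- Let p be a nonempty subword pattern of length m, k ≥ 1, and s ≥ 0. For a word σ of length n let N_p(σ) be the maximum number of pairwise non-overlapping occurrences of p in σ. Then in ℚ[[x]]: Σ_{n≥0} #{σ : Fin n → Fin k | N_p(σ) = s}·xⁿ = A_p(x;k)·((k·x − 1)·A_p(x;k) + 1)^s. -/
/-- `σ` has `t` pairwise non-overlapping occurrences of the subword pattern `p`. -/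
def HasNonOverlapping {m l n k : ℕ} (p : Fin m → Fin l) (σ : Fin n → Fin k) (t : ℕ) : Prop :=
  ∃ i : Fin t → ℕ,
    (∀ (j : Fin t) (h : (j : ℕ) + 1 < t), i j + m ≤ i ⟨(j : ℕ) + 1, h⟩) ∧
      ∀ j : Fin t, OccursAt p σ (i j)

/-- `N_p(σ)`: the maximum number of pairwise non-overlapping occurrences of `p` in `σ`. -/
noncomputable def NOcc {m l n k : ℕ} (p : Fin m → Fin l) (σ : Fin n → Fin k) : ℕ :=
  sSup {t : ℕ | HasNonOverlapping p σ t}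

/-- Generating function for the number of `k`-ary words avoiding the subword pattern `p`. -/
noncomputable def Apat {m l : ℕ} (p : Fin m → Fin l) (k : ℕ) : PowerSeries ℚ :=
  PowerSeries.mk fun n => (Nat.card {σ : Fin n → Fin k // AvoidsPat p σ} : ℚ)

/-!
Cut a word `σ` with `N_p(σ) = s + 1` right after the end `r` of its first occurrence of `p`.
Taking that occurrence first is optimal for a family of non-overlapping occurrences, so
`σ = β ++ τ` where `N_p(τ) = s` and `β` is a word of length `r` in which `p` occurs, every
occurrence ending at the last letter; conversely every such pair glues to a word with
`N_p = s + 1`. Hence the series for `N_p = s + 1` is `C(x)` times the series for `N_p = s`,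
where `C` counts the words `β`. Finally, extending a `p`-avoiding word by one letter gives
either a word counted by `C` or a `p`-avoiding word, so `C = 1 + (k x - 1) A_p(x; k)`.
-/

def HasSpaced (P : ℕ → Prop) (m t : ℕ) : Prop :=
  ∃ i : Fin t → ℕ,
    (∀ (j : Fin t) (h : (j : ℕ) + 1 < t), i j + m ≤ i ⟨(j : ℕ) + 1, h⟩) ∧ ∀ j, P (i j)

namespace HasSpaced

variable {P : ℕ → Prop} {m t : ℕ}

theorem zero : HasSpaced P m 0 :=
  ⟨Fin.elim0, fun j => j.elim0, fun j => j.elim0⟩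

theorem of_shift {d : ℕ} (h : HasSpaced (fun j => P (d + j)) m t) : HasSpaced P m t := by
  obtain ⟨i, hi, hP⟩ := h
  refine ⟨fun j => d + i j, fun j hj => ?_, hP⟩
  simpa only [add_assoc] using Nat.add_le_add_left (hi j hj) d

theorem spacing_succ_iff {i : Fin (t + 1) → ℕ} :
    (∀ (j : Fin (t + 1)) (h : (j : ℕ) + 1 < t + 1), i j + m ≤ i ⟨(j : ℕ) + 1, h⟩) ↔
      ∀ j : Fin t, i j.castSucc + m ≤ i j.succ :=
  ⟨fun h j => h j.castSucc j.succ.isLt, fun h j hj => h ⟨j, by omega⟩⟩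

theorem succ_iff : HasSpaced P m (t + 1) ↔ ∃ a, P a ∧ HasSpaced (fun j => P (a + m + j)) m t := by
  constructor
  · rintro ⟨i, hi, hP⟩
    rw [spacing_succ_iff] at hi
    have hmono : Monotone i := Fin.monotone_iff_le_succ.2 fun j => le_of_add_le_left (hi j)
    have hfirst (j : Fin t) : i 0 + m ≤ i j.succ :=
      (Nat.add_le_add_right (hmono (Fin.zero_le _)) m).trans (hi j)
    refine ⟨i 0, hP 0, fun j => i j.succ - (i 0 + m), fun j hj => ?_, fun j => ?_⟩
    · have h₁ := hfirst j
      have h₂ : i j.succ + m ≤ i (Fin.succ ⟨j + 1, hj⟩) := hi ⟨j + 1, hj⟩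
      show i j.succ - (i 0 + m) + m ≤ i (Fin.succ ⟨j + 1, hj⟩) - (i 0 + m)
      omega
    · simpa only [Nat.add_sub_cancel' (hfirst j)] using hP j.succ
  · rintro ⟨a, ha, i, hi, hP⟩
    refine ⟨Fin.cons a fun j => a + m + i j, spacing_succ_iff.2 fun j => ?_, Fin.cases ha hP⟩
    cases t with
    | zero => exact j.elim0
    | succ t =>
      rw [spacing_succ_iff] at hi
      induction j using Fin.cases with
      | zero => simp
      | succ j =>
        have := hi j
        simp only [← Fin.succ_castSucc, Fin.cons_succ]
        omega

theorem one_iff : HasSpaced P m 1 ↔ ∃ a, P a := by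
  simp [succ_iff, zero]

theorem of_le {t' : ℕ} (h : HasSpaced P m t) (ht : t' ≤ t) : HasSpaced P m t' := by
  induction t' generalizing t P with
  | zero => exact zero
  | succ t' ih =>
    obtain ⟨t, rfl⟩ := Nat.exists_eq_add_of_lt ht
    obtain ⟨a, ha, hs⟩ := succ_iff.1 h
    exact succ_iff.2 ⟨a, ha, ih hs (by omega)⟩

theorem le_of_forall_add_le (hm : 1 ≤ m) {n : ℕ} (hP : ∀ a, P a → a + m ≤ n) (h : HasSpaced P m t) :
    t ≤ n := by
  induction t generalizing n P with
  | zero => exact n.zero_le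
  | succ t ih =>
    obtain ⟨a, ha, hs⟩ := succ_iff.1 h
    have := hP a ha
    have := ih (n := n - (a + m)) (fun j hj => by have := hP _ hj; omega) hs
    omega

theorem succ_iff_of_isLeast {f : ℕ} (hf : IsLeast ((· + m) '' {a | P a}) f) :
    HasSpaced P m (t + 1) ↔ HasSpaced (fun j => P (f + j)) m t := by
  constructor
  · intro h
    obtain ⟨a, ha, hs⟩ := succ_iff.1 h
    obtain ⟨d, hd⟩ := Nat.exists_eq_add_of_le (hf.2 ⟨a, ha, rfl⟩)
    exact of_shift (P := fun j => P (f + j)) (d := d) (by simpa only [hd, add_assoc] using hs)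
  · obtain ⟨a, ha, rfl⟩ := hf.1
    exact fun h => succ_iff.2 ⟨a, ha, h⟩

end HasSpaced

section Words

variable {m l k : ℕ} {p : Fin m → Fin l}

def occEnds {n : ℕ} (p : Fin m → Fin l) (σ : Fin n → Fin k) : Set ℕ :=
  (· + m) '' {i | OccursAt p σ i}

theorem le_of_mem_occEnds {n e : ℕ} {σ : Fin n → Fin k} (he : e ∈ occEnds p σ) : e ≤ n := by
  obtain ⟨i, ⟨hi, -⟩, rfl⟩ := he
  exact hi

theorem avoidsPat_iff_occEnds_eq_empty {n : ℕ} {σ : Fin n → Fin k} :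
    AvoidsPat p σ ↔ occEnds p σ = ∅ := by
  simp [AvoidsPat, occEnds, Set.eq_empty_iff_forall_notMem]

theorem occursAt_congr {n n' i i' : ℕ} {σ : Fin n → Fin k} {τ : Fin n' → Fin k}
    (h : i + m ≤ n) (h' : i' + m ≤ n')
    (he : ∀ a : Fin m, σ ⟨i + a, by omega⟩ = τ ⟨i' + a, by omega⟩) :
    OccursAt p σ i ↔ OccursAt p τ i' :=
  ⟨fun ⟨_, hσ⟩ => ⟨h', fun a b => by rw [← he, ← he]; exact hσ a b⟩,
    fun ⟨_, hτ⟩ => ⟨h, fun a b => by rw [he, he]; exact hτ a b⟩⟩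

theorem occEnds_eq_empty_of_lt {n : ℕ} (h : n < m) (σ : Fin n → Fin k) : occEnds p σ = ∅ :=
  Set.eq_empty_of_forall_notMem fun _ he => by
    obtain ⟨i, ⟨hi, -⟩, -⟩ := he
    omega

variable {r t : ℕ} {β : Fin r → Fin k} {τ : Fin t → Fin k}

theorem occursAt_append_left {i : ℕ} (h : i + m ≤ r) :
    OccursAt p (Fin.append β τ) i ↔ OccursAt p β i :=
  occursAt_congr (by omega) h fun a => Fin.append_left β τ ⟨i + a, _⟩

theorem occursAt_append_right {j : ℕ} :
    OccursAt p (Fin.append β τ) (r + j) ↔ OccursAt p τ j := by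
  by_cases h : j + m ≤ t
  · refine occursAt_congr (by omega) h fun a => ?_
    rw [← Fin.append_right β τ ⟨j + a, _⟩]
    congr 1
    ext
    simp [add_assoc]
  · exact iff_of_false (fun ho => h (by have := ho.1; omega)) fun ho => h ho.1

theorem mem_occEnds_append_iff {e : ℕ} (he : e ≤ r) :
    e ∈ occEnds p (Fin.append β τ) ↔ e ∈ occEnds p β := by
  constructor
  · rintro ⟨i, hi, rfl⟩
    exact ⟨i, (occursAt_append_left he).1 hi, rfl⟩
  · rintro ⟨i, hi, rfl⟩
    exact ⟨i, (occursAt_append_left he).2 hi, rfl⟩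

theorem isLeast_occEnds_append_iff :
    IsLeast (occEnds p (Fin.append β τ)) r ↔ IsLeast (occEnds p β) r := by
  constructor
  · rintro ⟨hr, hlb⟩
    exact ⟨(mem_occEnds_append_iff le_rfl).1 hr, fun e he =>
      hlb ((mem_occEnds_append_iff (le_of_mem_occEnds he)).2 he)⟩
  · rintro ⟨hr, hlb⟩
    refine ⟨(mem_occEnds_append_iff le_rfl).2 hr, fun e he => ?_⟩
    by_contra! hlt
    exact hlt.not_ge (hlb ((mem_occEnds_append_iff hlt.le).1 he))

theorem succ_mem_lowerBounds_occEnds_append_iff :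
    r + 1 ∈ lowerBounds (occEnds p (Fin.append β τ)) ↔ AvoidsPat p β := by
  rw [avoidsPat_iff_occEnds_eq_empty, Set.eq_empty_iff_forall_notMem]
  constructor
  · intro hlb e he
    have := hlb ((mem_occEnds_append_iff (le_of_mem_occEnds he)).2 he)
    have := le_of_mem_occEnds he
    omega
  · intro hβ e he
    by_contra! hlt
    exact hβ e ((mem_occEnds_append_iff (by omega)).1 he)

theorem hasNonOverlapping_iff {n s : ℕ} {σ : Fin n → Fin k} :
    HasNonOverlapping p σ s ↔ HasSpaced (OccursAt p σ) m s :=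
  Iff.rfl

theorem nOcc_eq_iff (hm : 1 ≤ m) {n s : ℕ} {σ : Fin n → Fin k} :
    NOcc p σ = s ↔ HasNonOverlapping p σ s ∧ ¬ HasNonOverlapping p σ (s + 1) := by
  have hne : {u | HasNonOverlapping p σ u}.Nonempty := ⟨0, HasSpaced.zero⟩
  have hbdd : BddAbove {u | HasNonOverlapping p σ u} :=
    ⟨n, fun u hu => HasSpaced.le_of_forall_add_le hm (fun a ha => ha.1) hu⟩
  constructor
  · rintro rfl
    exact ⟨Nat.sSup_mem hne hbdd, fun h => (le_csSup hbdd h).not_gt (Nat.lt_succ_self _)⟩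
  · rintro ⟨hs, hs'⟩
    refine le_antisymm (csSup_le hne fun u hu => ?_) (le_csSup hbdd hs)
    by_contra! hlt
    exact hs' (HasSpaced.of_le hu hlt)

theorem nOcc_eq_zero_iff (hm : 1 ≤ m) {n : ℕ} {σ : Fin n → Fin k} :
    NOcc p σ = 0 ↔ AvoidsPat p σ := by
  rw [nOcc_eq_iff hm, hasNonOverlapping_iff, hasNonOverlapping_iff, HasSpaced.one_iff]
  simp [AvoidsPat, HasSpaced.zero]

theorem nOcc_append_of_isLeast (hm : 1 ≤ m) (h : IsLeast (occEnds p (Fin.append β τ)) r) :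
    NOcc p (Fin.append β τ) = NOcc p τ + 1 := by
  have hshift : (fun j => OccursAt p (Fin.append β τ) (r + j)) = OccursAt p τ :=
    funext fun j => propext occursAt_append_right
  have hsucc (u : ℕ) : HasNonOverlapping p (Fin.append β τ) (u + 1) ↔ HasNonOverlapping p τ u :=
    (HasSpaced.succ_iff_of_isLeast h).trans (by rw [hshift]; rfl)
  rw [nOcc_eq_iff hm, hsucc, hsucc]
  exact (nOcc_eq_iff hm).1 rfl

end Words

section Counting

open Finset

variable {m l : ℕ} {p : Fin m → Fin l} {k : ℕ}

theorem occEnds_nonempty_of_nOcc_eq_succ (hm : 1 ≤ m) {n s : ℕ} {σ : Fin n → Fin k}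
    (h : NOcc p σ = s + 1) : (occEnds p σ).Nonempty := by
  rw [Set.nonempty_iff_ne_empty, Ne, ← avoidsPat_iff_occEnds_eq_empty, ← nOcc_eq_zero_iff hm, h]
  exact s.succ_ne_zero

theorem card_nOcc_succ_isLeast (hm : 1 ≤ m) (r t s : ℕ) :
    Nat.card {σ : Fin (r + t) → Fin k // NOcc p σ = s + 1 ∧ IsLeast (occEnds p σ) r} =
      Nat.card {β : Fin r → Fin k // IsLeast (occEnds p β) r} *
        Nat.card {τ : Fin t → Fin k // NOcc p τ = s} := by
  rw [← Nat.card_prod]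
  refine Nat.card_congr (Equiv.subtypeProdEquivProd.symm.trans
    (Equiv.subtypeEquiv (Fin.appendEquiv r t) fun x => ?_)).symm
  obtain ⟨β, τ⟩ := x
  change IsLeast (occEnds p β) r ∧ NOcc p τ = s ↔
    NOcc p (Fin.append β τ) = s + 1 ∧ IsLeast (occEnds p (Fin.append β τ)) r
  rw [isLeast_occEnds_append_iff, and_comm, and_congr_left_iff]
  intro h
  rw [nOcc_append_of_isLeast hm (isLeast_occEnds_append_iff.2 h), Nat.add_right_cancel_iff]

theorem card_nOcc_succ (hm : 1 ≤ m) (n s : ℕ) :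
    Nat.card {σ : Fin n → Fin k // NOcc p σ = s + 1} =
      ∑ x ∈ antidiagonal n, Nat.card {β : Fin x.1 → Fin k // IsLeast (occEnds p β) x.1} *
        Nat.card {τ : Fin x.2 → Fin k // NOcc p τ = s} := by
  classical
  have hfiber : Nat.card {σ : Fin n → Fin k // NOcc p σ = s + 1} = ∑ x ∈ antidiagonal n,
      Nat.card {σ : Fin n → Fin k // NOcc p σ = s + 1 ∧ IsLeast (occEnds p σ) x.1} := by
    rw [Nat.sum_antidiagonal_eq_sum_range_succ_mk]
    simp only [Nat.card_eq_fintype_card, Fintype.card_subtype]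
    rw [card_eq_sum_card_fiberwise (f := fun σ => sInf (occEnds p σ)) (t := range n.succ)]
    · refine sum_congr rfl fun r _ => ?_
      rw [filter_filter]
      refine congrArg card (filter_congr fun σ _ => and_congr_right fun hσ => ?_)
      exact ⟨fun h => h ▸ isLeast_csInf (occEnds_nonempty_of_nOcc_eq_succ hm hσ), IsLeast.csInf_eq⟩
    · intro σ hσ
      have hne := occEnds_nonempty_of_nOcc_eq_succ hm (mem_filter.1 hσ).2
      exact mem_range_succ_iff.2 (le_of_mem_occEnds (isLeast_csInf hne).1)
  rw [hfiber]
  refine sum_congr rfl fun ⟨r, t⟩ h => ?_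
  rw [HasAntidiagonal.mem_antidiagonal] at h
  subst h
  exact card_nOcc_succ_isLeast hm r t s

theorem card_isLeast_add_card_avoidsPat (r : ℕ) :
    Nat.card {β : Fin (r + 1) → Fin k // IsLeast (occEnds p β) (r + 1)} +
        Nat.card {β : Fin (r + 1) → Fin k // AvoidsPat p β} =
      k * Nat.card {α : Fin r → Fin k // AvoidsPat p α} := by
  classical
  have hdisj : Disjoint (fun β : Fin (r + 1) → Fin k => IsLeast (occEnds p β) (r + 1))
      (fun β => AvoidsPat p β) := fun _ hL hA β hβ =>
    Set.notMem_empty _ (avoidsPat_iff_occEnds_eq_empty.1 (hA β hβ) ▸ (hL β hβ).1)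
  have hsplit (β : Fin (r + 1) → Fin k) : IsLeast (occEnds p β) (r + 1) ∨ AvoidsPat p β ↔
      r + 1 ∈ lowerBounds (occEnds p β) := by
    refine ⟨fun h => h.elim (fun hL => hL.2) fun hA => ?_, fun hlb => ?_⟩
    · simp [avoidsPat_iff_occEnds_eq_empty.1 hA]
    · rw [or_iff_not_imp_right, avoidsPat_iff_occEnds_eq_empty, ← Ne,
        ← Set.nonempty_iff_ne_empty]
      rintro ⟨e, he⟩
      obtain rfl := (le_of_mem_occEnds he).antisymm (hlb he)
      exact ⟨he, hlb⟩
  calc _ = Nat.card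
          {β : Fin (r + 1) → Fin k // IsLeast (occEnds p β) (r + 1) ∨ AvoidsPat p β} := by
        rw [Nat.card_congr (subtypeOrEquiv _ _ hdisj), Nat.card_sum]
    _ = Nat.card {x : (Fin r → Fin k) × (Fin 1 → Fin k) // AvoidsPat p x.1} :=
        Nat.card_congr ((Equiv.subtypeEquivRight hsplit).trans (Equiv.subtypeEquiv
          (Fin.appendEquiv r 1) fun _ => succ_mem_lowerBounds_occEnds_append_iff.symm).symm)
    _ = k * Nat.card {α : Fin r → Fin k // AvoidsPat p α} := by
        rw [Nat.card_congr Equiv.prodSubtypeFstEquivSubtypeProd, Nat.card_prod, mul_comm]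
        simp

end Counting

section Series

open PowerSeries

variable {m l : ℕ} {p : Fin m → Fin l} {k : ℕ}

noncomputable def firstOccSeries (p : Fin m → Fin l) (k : ℕ) : PowerSeries ℚ :=
  mk fun r => (Nat.card {β : Fin r → Fin k // IsLeast (occEnds p β) r} : ℚ)

theorem firstOccSeries_eq (hm : 1 ≤ m) :
    firstOccSeries p k = ((k : PowerSeries ℚ) * X - 1) * Apat p k + 1 := by
  have hk : (k : PowerSeries ℚ) = C (k : ℚ) := (map_natCast C k).symm
  rw [hk, sub_mul, mul_assoc, one_mul]
  ext (_ | r)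
  · have hA : Nat.card {σ : Fin 0 → Fin k // AvoidsPat p σ} = 1 := by
      simp [avoidsPat_iff_occEnds_eq_empty, occEnds_eq_empty_of_lt hm]
    simp [firstOccSeries, Apat, hA, occEnds_eq_empty_of_lt hm, IsLeast]
  · have h := card_isLeast_add_card_avoidsPat (p := p) (k := k) r
    simp only [firstOccSeries, Apat, map_add, map_sub, coeff_mk, coeff_C_mul, coeff_succ_X_mul,
      coeff_one, if_neg r.succ_ne_zero]
    rw [← Nat.cast_inj (R := ℚ)] at h
    push_cast at h
    linarith

theorem mk_card_nOcc_zero (hm : 1 ≤ m) :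
    (mk fun n => (Nat.card {σ : Fin n → Fin k // NOcc p σ = 0} : ℚ)) = Apat p k := by
  ext n
  rw [Apat, coeff_mk, coeff_mk,
    Nat.card_congr (Equiv.subtypeEquivRight fun _ => nOcc_eq_zero_iff hm)]

theorem mk_card_nOcc_succ (hm : 1 ≤ m) (s : ℕ) :
    (mk fun n => (Nat.card {σ : Fin n → Fin k // NOcc p σ = s + 1} : ℚ)) =
      firstOccSeries p k * mk fun n => (Nat.card {σ : Fin n → Fin k // NOcc p σ = s} : ℚ) := by
  ext n
  rw [coeff_mk, coeff_mul, card_nOcc_succ hm]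
  simp [firstOccSeries]

end Series

theorem stmt17_general (m l : ℕ) (hm : 1 ≤ m) (p : Fin m → Fin l) (k : ℕ) (s : ℕ) :
    (PowerSeries.mk fun n => (Nat.card {σ : Fin n → Fin k // NOcc p σ = s} : ℚ)) =
      Apat p k * (((k : PowerSeries ℚ) * PowerSeries.X - 1) * Apat p k + 1) ^ s := by
  induction s with
  | zero => rw [pow_zero, mul_one, mk_card_nOcc_zero hm]
  | succ s ih => rw [mk_card_nOcc_succ hm, ih, ← firstOccSeries_eq hm]; ring

theorem stmt17 (m l : ℕ) (hm : 1 ≤ m) (p : Fin m → Fin l) (k : ℕ) (hk : 1 ≤ k) (s : ℕ) :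
    (PowerSeries.mk fun n => (Nat.card {σ : Fin n → Fin k // NOcc p σ = s} : ℚ)) =
      Apat p k * (((k : PowerSeries ℚ) * PowerSeries.X - 1) * Apat p k + 1) ^ s :=
  stmt17_general m l hm p k s
end
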